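/- Discrete Sobolev inequality in 1D: there exists a constant C > 0 independent of h and M such that for every u ∈ X_M, ‖u‖_∞ ≤ C (‖u‖ + ‖δ_x⁺ u‖), where ‖u‖_∞ = max_j |u_j|, ‖u‖² = h Σ_{j=1}^{M−1}|u_j|², and ‖δ_x⁺u‖² = h Σ_{j=0}^{M−1}|(u_{j+1}−u_j)/h|², on a grid over a fixed bounded interval [a,b] with h = (b−a)/M. -/
import Mathlib


open Finset

lemma sobolev_aux (t S D h : ℝ) (ht : 0 ≤ t) (hS : 0 ≤ S) (hD : 0 ≤ D) (hh : 0 < h)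
    (key : t ^ 2 ≤ 2 * Real.sqrt (S * D)) :
    t ≤ Real.sqrt (h * S) + Real.sqrt (h * (D / h ^ 2)) := by
  set X : ℝ := Real.sqrt (h * S) with hX
  set Y : ℝ := Real.sqrt (h * (D / h ^ 2)) with hY
  have hX0 : 0 ≤ X := Real.sqrt_nonneg _
  have hY0 : 0 ≤ Y := Real.sqrt_nonneg _
  have hXY : X * Y = Real.sqrt (S * D) := by
    rw [hX, hY, ← Real.sqrt_mul (by positivity)]
    congr 1
    field_simp
  have hsq : t ^ 2 ≤ (X + Y) ^ 2 := by nlinarith [sq_nonneg (X - Y)]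
  nlinarith

/-- discrete Sobolev inequality in 1D: on a fixed bounded interval `[a,b]`
there is a constant `C > 0`, independent of the mesh size `h = (b−a)/M` and of `M`,
such that `‖u‖_∞ ≤ C (‖u‖ + ‖δ_x⁺ u‖)` for every grid function `u ∈ X_M`. -/
theorem discrete_sobolev_inequality (a b : ℝ) (hab : a < b) :
    ∃ C : ℝ, 0 < C ∧ ∀ M : ℕ, 2 ≤ M → ∀ u : ℕ → ℂ, u 0 = 0 → u M = 0 →
      ∀ j, j ≤ M →
        ‖u j‖ ≤ C * (Real.sqrt ((b - a) / M * ∑ i ∈ Finset.Ico 1 M, ‖u i‖ ^ 2) +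
          Real.sqrt ((b - a) / M *
            ∑ i ∈ Finset.range M, ‖(u (i + 1) - u i) / (((b - a) / M : ℝ) : ℂ)‖ ^ 2)) := by
  refine ⟨1, one_pos, ?_⟩
  intro M hM u h0 hMz j hj
  have hM0 : 0 < M := by omega
  set h : ℝ := (b - a) / M with hh
  have hpos : 0 < h := div_pos (sub_pos.2 hab) (by exact_mod_cast hM0)
  set S : ℝ := ∑ i ∈ Finset.Ico 1 M, ‖u i‖ ^ 2 with hSdef
  set D : ℝ := ∑ i ∈ Finset.range M, ‖u (i + 1) - u i‖ ^ 2 with hDdef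
  have hS0 : 0 ≤ S := Finset.sum_nonneg fun i _ => sq_nonneg _
  have hD0 : 0 ≤ D := Finset.sum_nonneg fun i _ => sq_nonneg _
  -- telescoping
  have tele : ‖u j‖ ^ 2 = ∑ i ∈ Finset.range j, (‖u (i + 1)‖ ^ 2 - ‖u i‖ ^ 2) := by
    rw [Finset.sum_range_sub (fun i => ‖u i‖ ^ 2)]
    simp [h0]
  -- termwise bound
  have term : ∀ i, ‖u (i + 1)‖ ^ 2 - ‖u i‖ ^ 2 ≤
      (‖u (i + 1)‖ + ‖u i‖) * ‖u (i + 1) - u i‖ := by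
    intro i
    have h1 : ‖u (i + 1)‖ - ‖u i‖ ≤ ‖u (i + 1) - u i‖ := norm_sub_norm_le _ _
    nlinarith [norm_nonneg (u (i + 1)), norm_nonneg (u i), norm_nonneg (u (i + 1) - u i)]
  -- Cauchy-Schwarz
  have CS : (∑ i ∈ Finset.range j, (‖u (i + 1)‖ + ‖u i‖) * ‖u (i + 1) - u i‖) ^ 2 ≤
      (∑ i ∈ Finset.range j, (‖u (i + 1)‖ + ‖u i‖) ^ 2) *
        ∑ i ∈ Finset.range j, ‖u (i + 1) - u i‖ ^ 2 :=
    Finset.sum_mul_sq_le_sq_mul_sq _ _ _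
  -- bound ∑ (‖u(i+1)‖+‖u i‖)^2 ≤ 4 S
  have hshift : ∑ i ∈ Finset.range j, ‖u (i + 1)‖ ^ 2 ≤ S := by
    have e1 : ∑ i ∈ Finset.range j, ‖u (i + 1)‖ ^ 2 =
        ∑ i ∈ Finset.Ico 1 (j + 1), ‖u i‖ ^ 2 := by
      rw [Finset.sum_Ico_eq_sum_range]
      simp [add_comm]
    rw [e1]
    have e2 : ∑ i ∈ Finset.Ico 1 (j + 1), ‖u i‖ ^ 2 ≤
        ∑ i ∈ Finset.Ico 1 (M + 1), ‖u i‖ ^ 2 :=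
      Finset.sum_le_sum_of_subset_of_nonneg
        (Finset.Ico_subset_Ico le_rfl (by omega)) (fun i _ _ => sq_nonneg _)
    have e3 : ∑ i ∈ Finset.Ico 1 (M + 1), ‖u i‖ ^ 2 = S := by
      rw [Finset.sum_Ico_succ_top (by omega), hMz, norm_zero, hSdef]
      norm_num
    linarith
  have hnoshift : ∑ i ∈ Finset.range j, ‖u i‖ ^ 2 ≤ S := by
    have e1 : ∑ i ∈ Finset.range j, ‖u i‖ ^ 2 ≤ ∑ i ∈ Finset.range M, ‖u i‖ ^ 2 :=
      Finset.sum_le_sum_of_subset_of_nonneg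
        (Finset.range_subset_range.2 hj) (fun i _ _ => sq_nonneg _)
    have e2 : ∑ i ∈ Finset.range M, ‖u i‖ ^ 2 = S := by
      rw [Finset.range_eq_Ico, Finset.sum_eq_sum_Ico_succ_bot hM0, h0, norm_zero, hSdef]
      norm_num
    linarith
  have hA : ∑ i ∈ Finset.range j, (‖u (i + 1)‖ + ‖u i‖) ^ 2 ≤ 4 * S := by
    have : ∑ i ∈ Finset.range j, (‖u (i + 1)‖ + ‖u i‖) ^ 2 ≤
        ∑ i ∈ Finset.range j, (2 * ‖u (i + 1)‖ ^ 2 + 2 * ‖u i‖ ^ 2) := by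
      refine Finset.sum_le_sum fun i _ => ?_
      nlinarith [sq_nonneg (‖u (i + 1)‖ - ‖u i‖)]
    rw [Finset.sum_add_distrib, ← Finset.mul_sum, ← Finset.mul_sum] at this
    linarith
  have hB : ∑ i ∈ Finset.range j, ‖u (i + 1) - u i‖ ^ 2 ≤ D :=
    Finset.sum_le_sum_of_subset_of_nonneg
      (Finset.range_subset_range.2 hj) (fun i _ _ => sq_nonneg _)
  -- combine: ‖u j‖^2 ≤ 2 √(S*D)
  have sum_nonneg' : 0 ≤ ∑ i ∈ Finset.range j, (‖u (i + 1)‖ + ‖u i‖) * ‖u (i + 1) - u i‖ :=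
    Finset.sum_nonneg fun i _ => mul_nonneg (by positivity) (norm_nonneg _)
  have key : ‖u j‖ ^ 2 ≤ 2 * Real.sqrt (S * D) := by
    have h1 : ‖u j‖ ^ 2 ≤ ∑ i ∈ Finset.range j, (‖u (i + 1)‖ + ‖u i‖) * ‖u (i + 1) - u i‖ := by
      rw [tele]
      exact Finset.sum_le_sum fun i _ => term i
    have h2 : (∑ i ∈ Finset.range j, (‖u (i + 1)‖ + ‖u i‖) * ‖u (i + 1) - u i‖) ^ 2 ≤
        4 * (S * D) := by
      calc _ ≤ _ := CS
        _ ≤ (4 * S) * D := by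
          apply mul_le_mul hA hB (Finset.sum_nonneg fun i _ => sq_nonneg _) (by linarith)
        _ = 4 * (S * D) := by ring
    have h3 : ∑ i ∈ Finset.range j, (‖u (i + 1)‖ + ‖u i‖) * ‖u (i + 1) - u i‖ ≤
        Real.sqrt (4 * (S * D)) := by
      have := Real.sqrt_le_sqrt h2
      rwa [Real.sqrt_sq sum_nonneg'] at this
    have h4 : Real.sqrt (4 * (S * D)) = 2 * Real.sqrt (S * D) := by
      rw [Real.sqrt_mul (by norm_num), show (4:ℝ) = 2 ^ 2 by norm_num,
        Real.sqrt_sq (by norm_num)]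
    linarith
  -- rewrite the difference-quotient sum
  have hD' : ∑ i ∈ Finset.range M, ‖(u (i + 1) - u i) / ((h : ℝ) : ℂ)‖ ^ 2 = D / h ^ 2 := by
    rw [hDdef, Finset.sum_div]
    refine Finset.sum_congr rfl fun i _ => ?_
    rw [norm_div, Complex.norm_real, Real.norm_eq_abs, abs_of_pos hpos, div_pow]
  rw [hD', one_mul]
  clear_value S D
  exact sobolev_aux ‖u j‖ S D h (norm_nonneg _) hS0 hD0 hpos key
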